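/- arXiv:0806.1837 — 4 statements merged into one kernel-verified Lean document; each statement's English description precedes it below -/
import Mathlib

section
/- Let S > 0 and 0 < T < S. Let f : [0,S] → ℝ be a function of bounded variation on [0,S] and let g : [0,S] → ℝ be continuous. Then lim_{ε→0⁺} (1/ε) ∫_0^T (f(t+ε) − f(t))·(g(t+ε) − g(t)) dt = 0. -/
/-!
Dividing by `ε` turns the integrand into `slope f t (t + ε) * (g (t + ε) - g t)`. The slopes of `f`
are dominated by those of its variation function `φ = variationOnFromTo f [0,S] 0`, which is
monotone, and the integral over `[0,T]` of the slopes of a monotone function telescopes to at most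
`φ (T + ε) - φ 0 ≤ Var f`. Uniform continuity of `g` makes the second factor uniformly small.
-/

open MeasureTheory Filter Set Topology

theorem LocallyBoundedVariationOn.abs_slope_le_slope_variationOnFromTo {f : ℝ → ℝ} {s : Set ℝ}
    (hf : LocallyBoundedVariationOn f s) {a x y : ℝ} (ha : a ∈ s) (hx : x ∈ s) (hy : y ∈ s)
    (hxy : x ≤ y) : |slope f x y| ≤ slope (variationOnFromTo f s a) x y := by
  rw [slope_def_field, slope_def_field, abs_div, abs_of_nonneg (sub_nonneg.2 hxy)]
  exact div_le_div_of_nonneg_right (variationOnFromTo.abs_sub_le_sub_of_le hf ha hx hy hxy)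
    (sub_nonneg.2 hxy)

theorem BoundedVariationOn.abs_integral_slope_mul_sub_le {f g : ℝ → ℝ} {s : Set ℝ} {a b ε δ : ℝ}
    (hf : BoundedVariationOn f s) (hs : Icc a (b + ε) ⊆ s) (hab : a ≤ b) (hε : 0 ≤ ε)
    (hg : ∀ t ∈ Icc a b, |g (t + ε) - g t| ≤ δ) :
    |∫ t in a..b, slope f t (t + ε) * (g (t + ε) - g t)| ≤ δ * (eVariationOn f s).toReal := by
  have ha : a ∈ s := hs ⟨le_rfl, by linarith⟩
  have hδ : 0 ≤ δ := (abs_nonneg _).trans (hg a ⟨le_rfl, hab⟩)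
  set φ := variationOnFromTo f s a
  have hφ : MonotoneOn φ (Icc a (b + ε)) :=
    (variationOnFromTo.monotoneOn hf.locallyBoundedVariationOn ha).mono hs
  have hpointwise : ∀ t ∈ Ioc a b,
      ‖slope f t (t + ε) * (g (t + ε) - g t)‖ ≤ slope φ t (t + ε) * δ := by
    intro t ⟨hat, htb⟩
    rw [Real.norm_eq_abs, abs_mul]
    have hslope := hf.locallyBoundedVariationOn.abs_slope_le_slope_variationOnFromTo ha
      (hs ⟨hat.le, by linarith⟩) (hs ⟨by linarith, by linarith⟩) (le_add_of_nonneg_right hε)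
    exact mul_le_mul hslope (hg t ⟨hat.le, htb⟩) (abs_nonneg _) ((abs_nonneg _).trans hslope)
  have hφ_end : φ (b + ε) - φ a ≤ (eVariationOn f s).toReal := by
    rw [show φ a = 0 from variationOnFromTo.self f s a, sub_zero]
    exact (le_abs_self _).trans (variationOnFromTo.abs_le_eVariationOn hf)
  calc |∫ t in a..b, slope f t (t + ε) * (g (t + ε) - g t)|
      ≤ ∫ t in a..b, slope φ t (t + ε) * δ :=
        intervalIntegral.norm_integral_le_of_norm_le hab (ae_of_all _ hpointwise)
          ((hφ.intervalIntegrable_slope hab hε).mul_const δ)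
    _ = (∫ t in a..b, slope φ t (t + ε)) * δ := intervalIntegral.integral_mul_const _ _
    _ ≤ (φ (b + ε) - φ a) * δ := by gcongr; exact hφ.intervalIntegral_slope_le hab hε
    _ ≤ δ * (eVariationOn f s).toReal := by rw [mul_comm]; gcongr

theorem ContinuousOn.eventually_abs_sub_comp_add_le {g : ℝ → ℝ} {a b c δ : ℝ}
    (hg : ContinuousOn g (Icc a c)) (hbc : b < c) (hδ : 0 < δ) :
    ∀ᶠ ε in 𝓝[>] 0, ∀ t ∈ Icc a b, |g (t + ε) - g t| ≤ δ := by
  obtain ⟨η, hη, hgη⟩ := Metric.uniformContinuousOn_iff.1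
    (isCompact_Icc.uniformContinuousOn_of_continuous hg) δ hδ
  filter_upwards [Ioo_mem_nhdsGT (lt_min hη (sub_pos.2 hbc))] with ε ⟨hε0, hε⟩ t ⟨hat, htb⟩
  obtain ⟨hεη, hεc⟩ := lt_min_iff.1 hε
  have hclose : dist (t + ε) t < η := by
    rwa [Real.dist_eq, add_sub_cancel_left, abs_of_pos hε0]
  rw [← Real.dist_eq]
  exact (hgη _ ⟨by linarith, by linarith⟩ t ⟨hat, by linarith⟩ hclose).le

theorem finite_variation_times_continuous_joint_quadratic_variation_zero_general
    (S T : ℝ) (hT : 0 < T) (hTS : T < S) (f g : ℝ → ℝ)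
    (hf : BoundedVariationOn f (Set.Icc 0 S))
    (hg : ContinuousOn g (Set.Icc 0 S)) :
    Tendsto (fun ε : ℝ =>
        (1 / ε) * ∫ t in (0:ℝ)..T, (f (t + ε) - f t) * (g (t + ε) - g t))
      (nhdsWithin 0 (Set.Ioi 0)) (nhds 0) := by
  rw [Metric.tendsto_nhds]
  intro δ hδ
  set V := (eVariationOn f (Icc 0 S)).toReal
  have hV : 0 ≤ V := ENNReal.toReal_nonneg
  filter_upwards [hg.eventually_abs_sub_comp_add_le hTS (div_pos hδ (by linarith : 0 < V + 1)),
    Ioo_mem_nhdsGT (sub_pos.2 hTS)] with ε hgε ⟨hε0, hεST⟩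
  have hslope_form : (1 / ε) * ∫ t in (0:ℝ)..T, (f (t + ε) - f t) * (g (t + ε) - g t) =
      ∫ t in (0:ℝ)..T, slope f t (t + ε) * (g (t + ε) - g t) := by
    rw [← intervalIntegral.integral_const_mul]
    simp only [slope_def_field, add_sub_cancel_left]
    congr 1 with t
    ring
  rw [Real.dist_eq, sub_zero, hslope_form]
  calc _ ≤ δ / (V + 1) * V :=
        hf.abs_integral_slope_mul_sub_le (Icc_subset_Icc le_rfl (by linarith)) hT.le hε0.le hgε
    _ < δ := by rw [div_mul_eq_mul_div, div_lt_iff₀ (by linarith)]; nlinarith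

/-- If `f` has bounded variation on `[0,S]` and `g` is continuous on `[0,S]`, then for
`0 < T < S` the joint quadratic variation
`(1/ε) ∫_0^T (f(t+ε) − f(t))(g(t+ε) − g(t)) dt` tends to `0` as `ε → 0⁺`. -/
theorem finite_variation_times_continuous_joint_quadratic_variation_zero
    (S T : ℝ) (hS : 0 < S) (hT : 0 < T) (hTS : T < S) (f g : ℝ → ℝ)
    (hf : BoundedVariationOn f (Set.Icc 0 S))
    (hg : ContinuousOn g (Set.Icc 0 S)) :
    Tendsto (fun ε : ℝ =>
        (1 / ε) * ∫ t in (0:ℝ)..T, (f (t + ε) - f t) * (g (t + ε) - g t))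
      (nhdsWithin 0 (Set.Ioi 0)) (nhds 0) :=
  finite_variation_times_continuous_joint_quadratic_variation_zero_general S T hT hTS f g hf hg
end

section
/- For every k ∈ L¹([0,T]²), A_ε k → 0 in L¹([0,T]) as ε → 0⁺, i.e. lim_{ε→0⁺} ∫_0^T |(A_ε k)(t)| dt = 0. -/
/-!
The square `(t, m]²`, `m = min (t + ε) T`, lies in the band `{|s - r| ≤ ε}` of `[0,T]²` and in the
strip `(t, t + ε] × ℝ`. Each `s` lies in that strip for `t` in an interval of length `ε`, so
integrating in `t` cancels the factor `1 / ε` and gives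
`∫₀ᵀ |A_ε k| ≤ ∫∫_{[0,T]² ∩ {|s - r| ≤ ε}} |k|`.
This is the mass of a band shrinking to the diagonal under the finite measure `|k| dλ²` on `[0,T]²`,
which does not charge the diagonal.
-/

open MeasureTheory Filter Set
open scoped ENNReal Interval

theorem enorm_intervalIntegral_le_lintegral_enorm_uIoc {E : Type*} [NormedAddCommGroup E]
    [NormedSpace ℝ E] (f : ℝ → E) (a b : ℝ) :
    ‖∫ x in a..b, f x‖ₑ ≤ ∫⁻ x in Ι a b, ‖f x‖ₑ := by
  rw [← ofReal_norm, intervalIntegral.norm_integral_eq_norm_integral_uIoc, ofReal_norm]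
  exact enorm_integral_le_lintegral_enorm f

theorem enorm_intervalIntegral_intervalIntegral_le_of_subset {E : Type*} [NormedAddCommGroup E]
    [NormedSpace ℝ E] (f : ℝ → ℝ → E) {a b : ℝ} (hab : a ≤ b) {S : Set (ℝ × ℝ)}
    (hS : Ioc a b ×ˢ Ioc a b ⊆ S) :
    ‖∫ s in a..b, ∫ r in a..b, f s r‖ₑ
      ≤ ∫⁻ s in Ioc a b, ∫⁻ r, S.indicator (fun p => ‖f p.1 p.2‖ₑ) (s, r) := by
  calc ‖∫ s in a..b, ∫ r in a..b, f s r‖ₑ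
      ≤ ∫⁻ s in Ioc a b, ∫⁻ r in Ioc a b, ‖f s r‖ₑ := by
        simpa only [uIoc_of_le hab] using
          (enorm_intervalIntegral_le_lintegral_enorm_uIoc _ a b).trans
            (lintegral_mono fun s => enorm_intervalIntegral_le_lintegral_enorm_uIoc _ a b)
    _ ≤ ∫⁻ s in Ioc a b, ∫⁻ r, S.indicator (fun p => ‖f p.1 p.2‖ₑ) (s, r) := by
        refine setLIntegral_mono' measurableSet_Ioc fun s hs => ?_
        calc ∫⁻ r in Ioc a b, ‖f s r‖ₑ
            = ∫⁻ r in Ioc a b, S.indicator (fun p => ‖f p.1 p.2‖ₑ) (s, r) :=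
              setLIntegral_congr_fun measurableSet_Ioc fun r hr =>
                (indicator_of_mem (hS (mk_mem_prod hs hr)) (fun p => ‖f p.1 p.2‖ₑ)).symm
          _ ≤ ∫⁻ r, S.indicator (fun p => ‖f p.1 p.2‖ₑ) (s, r) := setLIntegral_le_lintegral _ _

theorem lintegral_lintegral_Ioc_add_eq {F : ℝ → ℝ≥0∞} (hF : AEMeasurable F) (ε : ℝ) :
    ∫⁻ t, ∫⁻ x in Ioc t (t + ε), F x = ENNReal.ofReal ε * ∫⁻ x, F x := by
  have hshift : ∀ t, ∫⁻ x in Ioc t (t + ε), F x = ∫⁻ u in Ioc 0 ε, F (t + u) := fun t => by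
    rw [← lintegral_indicator measurableSet_Ioc, ← lintegral_indicator measurableSet_Ioc,
      ← lintegral_add_left_eq_self _ t]
    congr with u
    simp only [indicator_apply, mem_Ioc, lt_add_iff_pos_right, add_le_add_iff_left]
  have hmeas : AEMeasurable (Function.uncurry fun t u => F (t + u))
      (volume.prod (volume.restrict (Ioc 0 ε))) :=
    hF.comp_quasiMeasurePreserving <| (quasiMeasurePreserving_add volume volume).mono_left <|
      Measure.AbsolutelyContinuous.rfl.prod
        (Measure.absolutelyContinuous_of_le Measure.restrict_le_self)
  calc ∫⁻ t, ∫⁻ x in Ioc t (t + ε), F x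
      = ∫⁻ u in Ioc 0 ε, ∫⁻ t, F (t + u) := by
        simp_rw [hshift]
        exact lintegral_lintegral_swap hmeas
    _ = ENNReal.ofReal ε * ∫⁻ x, F x := by
        simp_rw [lintegral_add_right_eq_self, setLIntegral_const, Real.volume_Ioc, sub_zero,
          mul_comm]

theorem ofReal_intervalIntegral_abs_average_le (k : ℝ → ℝ → ℝ) {T ε : ℝ} (hT : 0 ≤ T)
    (hε : 0 < ε) (hk : AEStronglyMeasurable (fun p : ℝ × ℝ => k p.1 p.2)
      (volume.restrict (Icc 0 T ×ˢ Icc 0 T))) :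
    ENNReal.ofReal (∫ t in (0:ℝ)..T,
        |(1 / ε) * ∫ s in t..(min (t + ε) T), ∫ r in t..(min (t + ε) T), k s r|)
      ≤ ∫⁻ p in Icc 0 T ×ˢ Icc 0 T ∩ {p | |p.1 - p.2| ≤ ε}, ‖k p.1 p.2‖ₑ := by
  set S := Icc 0 T ×ˢ Icc 0 T ∩ {p : ℝ × ℝ | |p.1 - p.2| ≤ ε}
  have hS : MeasurableSet S := (measurableSet_Icc.prod measurableSet_Icc).inter
    (measurableSet_le (by fun_prop) measurable_const)
  set G := S.indicator fun p : ℝ × ℝ => ‖k p.1 p.2‖ₑ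
  have hG : AEMeasurable G (volume.prod volume) := (aemeasurable_indicator_iff hS).2 <|
    hk.enorm.mono_measure (Measure.restrict_mono inter_subset_left le_rfl)
  have hsquare : ∀ t ∈ Ioc 0 T,
      ‖|(1 / ε) * ∫ s in t..(min (t + ε) T), ∫ r in t..(min (t + ε) T), k s r|‖ₑ
        ≤ ENNReal.ofReal (1 / ε) * ∫⁻ s in Ioc t (t + ε), ∫⁻ r, G (s, r) := by
    intro t ht
    set m := min (t + ε) T
    have hmε : m ≤ t + ε := min_le_left _ _
    have hmT : m ≤ T := min_le_right _ _
    have hsub : Ioc t m ×ˢ Ioc t m ⊆ S := fun p ⟨⟨h1, h2⟩, h3, h4⟩ =>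
      ⟨⟨⟨by linarith [ht.1], h2.trans hmT⟩, ⟨by linarith [ht.1], h4.trans hmT⟩⟩,
        (abs_sub_le_iff.2 ⟨by linarith, by linarith⟩ : |p.1 - p.2| ≤ ε)⟩
    rw [Real.enorm_abs, enorm_mul, Real.enorm_of_nonneg (by positivity)]
    gcongr
    exact (enorm_intervalIntegral_intervalIntegral_le_of_subset k (le_min (by linarith) ht.2)
      hsub).trans (lintegral_mono_set (Ioc_subset_Ioc_right hmε))
  calc ENNReal.ofReal (∫ t in (0:ℝ)..T,
        |(1 / ε) * ∫ s in t..(min (t + ε) T), ∫ r in t..(min (t + ε) T), k s r|)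
      ≤ ∫⁻ t in Ioc 0 T,
          ‖|(1 / ε) * ∫ s in t..(min (t + ε) T), ∫ r in t..(min (t + ε) T), k s r|‖ₑ := by
        rw [intervalIntegral.integral_of_le hT]
        exact (ENNReal.ofReal_le_ofReal (Real.le_norm_self _)).trans
          ((ofReal_norm _).trans_le (enorm_integral_le_lintegral_enorm _))
    _ ≤ ∫⁻ t in Ioc 0 T, ENNReal.ofReal (1 / ε) * ∫⁻ s in Ioc t (t + ε), ∫⁻ r, G (s, r) :=
        setLIntegral_mono' measurableSet_Ioc hsquare
    _ ≤ ∫⁻ t, ENNReal.ofReal (1 / ε) * ∫⁻ s in Ioc t (t + ε), ∫⁻ r, G (s, r) :=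
        setLIntegral_le_lintegral _ _
    _ = ENNReal.ofReal (1 / ε) * (ENNReal.ofReal ε * ∫⁻ s, ∫⁻ r, G (s, r)) := by
        rw [lintegral_const_mul' _ _ ENNReal.ofReal_ne_top,
          lintegral_lintegral_Ioc_add_eq hG.lintegral_prod_right']
    _ = ∫⁻ p in S, ‖k p.1 p.2‖ₑ := by
        rw [← mul_assoc, ← ENNReal.ofReal_mul (by positivity), one_div_mul_cancel hε.ne',
          ENNReal.ofReal_one, one_mul, ← lintegral_prod _ hG, ← Measure.volume_eq_prod,
          lintegral_indicator hS]

theorem volume_diagonal_eq_zero : (volume : Measure (ℝ × ℝ)) {p | p.1 = p.2} = 0 := by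
  rw [Measure.volume_eq_prod,
    Measure.measure_prod_null (measurableSet_eq_fun measurable_fst measurable_snd)]
  exact Eventually.of_forall fun x => by simp [preimage]

theorem tendsto_measure_abs_sub_le_nhdsGT_zero (ν : Measure (ℝ × ℝ)) [IsFiniteMeasure ν]
    (hν : ν ≪ volume) :
    Tendsto (fun ε : ℝ => ν {p | |p.1 - p.2| ≤ ε}) (nhdsWithin 0 (Ioi 0)) (nhds 0) := by
  have hdiag : ν (⋂ ε > (0 : ℝ), {p : ℝ × ℝ | |p.1 - p.2| ≤ ε}) = 0 := by
    refine hν (measure_mono_null (fun p hp => ?_) volume_diagonal_eq_zero)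
    simp only [mem_iInter] at hp
    exact sub_eq_zero.1 <| abs_nonpos_iff.1 <|
      le_of_forall_pos_le_add fun ε hε => by simpa using hp ε hε
  rw [← hdiag]
  exact tendsto_measure_biInter_gt
    (fun ε _ => (measurableSet_le (by fun_prop) measurable_const).nullMeasurableSet)
    (fun _ _ _ hij _ hp => le_trans hp hij) ⟨1, one_pos, measure_ne_top _ _⟩

/-- For every `k ∈ L¹([0,T]²)`, the averages
`(A_ε k)(t) = (1/ε) ∫_t^{(t+ε)∧T} ∫_t^{(t+ε)∧T} k(s,r) dr ds` converge to `0` in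
`L¹([0,T])` as `ε → 0⁺`. -/
theorem averaging_operator_Aeps_tendsto_zero
    (T : ℝ) (hT : 0 < T) (k : ℝ → ℝ → ℝ)
    (hk : MeasureTheory.IntegrableOn (fun p : ℝ × ℝ => k p.1 p.2)
      (Set.Icc 0 T ×ˢ Set.Icc 0 T)) :
    Tendsto (fun ε : ℝ =>
        ∫ t in (0:ℝ)..T,
          |(1 / ε) * ∫ s in t..(min (t + ε) T), ∫ r in t..(min (t + ε) T), k s r|)
      (nhdsWithin 0 (Set.Ioi 0)) (nhds 0) := by
  set ν := (volume.restrict (Icc 0 T ×ˢ Icc 0 T)).withDensity fun p => ‖k p.1 p.2‖ₑ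
  have : IsFiniteMeasure ν := isFiniteMeasure_withDensity hk.2.ne
  have hν : ν ≪ volume := (withDensity_absolutelyContinuous _ _).trans
    (Measure.absolutelyContinuous_of_le Measure.restrict_le_self)
  have hbound : ∀ ε > 0, ENNReal.ofReal (∫ t in (0:ℝ)..T,
        |(1 / ε) * ∫ s in t..(min (t + ε) T), ∫ r in t..(min (t + ε) T), k s r|)
      ≤ ν {p | |p.1 - p.2| ≤ ε} := fun ε hε => by
    rw [withDensity_apply _ (measurableSet_le (by fun_prop) measurable_const),
      Measure.restrict_restrict (measurableSet_le (by fun_prop) measurable_const), inter_comm]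
    exact ofReal_intervalIntegral_abs_average_le k hT.le hε hk.1
  have hlim := tendsto_of_tendsto_of_tendsto_of_le_of_le' tendsto_const_nhds
    (tendsto_measure_abs_sub_le_nhdsGT_zero ν hν) (Eventually.of_forall fun _ => zero_le)
    (eventually_mem_nhdsWithin.mono hbound)
  simpa [Function.comp_def, ENNReal.toReal_ofReal
      (intervalIntegral.integral_nonneg hT.le fun _ _ => abs_nonneg _)] using
    (ENNReal.tendsto_toReal ENNReal.zero_ne_top).comp hlim
end

section
/- For every k ∈ L¹([0,T]) and every ε > 0, one has ∫_0^T |(B_ε k)(t)| dt ≤ 2 ∫_0^T |k(s)| ds, i.e. the operator B_ε : L¹([0,T]) → L¹([0,T]) has operator norm at most 2, uniformly in ε. -/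
/-!
Since |k(s) − k(t)| ≤ |k(s)| + |k(t)| and the window (max(t − ε, 0), t] has length at most
ε, (B_ε k)(t) is bounded by the backward ε-average of |k| (extended by zero outside (0, T])
plus |k(t)|. The second term integrates to ∫|k|, and so does the first by Tonelli: a point s
lies in the window of t exactly when t ∈ [s, s + ε). Estimating in lower Lebesgue integrals
means no measurability of B_ε k is ever needed.
-/

open MeasureTheory Set ENNReal

theorem lintegral_setLIntegral_Ioc_sub_self {f : ℝ → ℝ≥0∞} (hf : AEMeasurable f)
    (ε : ℝ) :
    ∫⁻ t, ∫⁻ s in Ioc (t - ε) t, f s = ENNReal.ofReal ε * ∫⁻ s, f s := by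
  set S := {p : ℝ × ℝ | p.2 ∈ Ioc (p.1 - ε) p.1}
  have hS : MeasurableSet S :=
    (measurableSet_lt (by fun_prop) measurable_snd).inter
      (measurableSet_le measurable_snd measurable_fst)
  calc ∫⁻ t, ∫⁻ s in Ioc (t - ε) t, f s
      = ∫⁻ t, ∫⁻ s, S.indicator (fun p => f p.2) (t, s) := by
        congr with t
        rw [← lintegral_indicator measurableSet_Ioc]
        rfl
    _ = ∫⁻ s, ∫⁻ t, S.indicator (fun p => f p.2) (t, s) :=
        lintegral_lintegral_swap (hf.comp_snd.indicator hS)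
    _ = ∫⁻ s, f s * ENNReal.ofReal ε := by
        congr with s
        have hslice : (fun t => S.indicator (fun p => f p.2) (t, s))
            = (Ico s (s + ε)).indicator (fun _ => f s) := by
          ext t
          simp only [S, indicator_apply, mem_ofPred_eq, mem_Ioc, mem_Ico]
          grind
        rw [hslice, lintegral_indicator_const measurableSet_Ico, Real.volume_Ico,
          add_sub_cancel_left]
    _ = ENNReal.ofReal ε * ∫⁻ s, f s := by
        rw [lintegral_mul_const' _ _ ofReal_ne_top, mul_comm]

theorem lintegral_enorm_sub_const_le {α E : Type*} [MeasurableSpace α] [NormedAddCommGroup E]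
    (μ : Measure α) (g : α → E) (c : E) :
    ∫⁻ x, ‖g x - c‖ₑ ∂μ ≤ ∫⁻ x, ‖g x‖ₑ ∂μ + μ univ * ‖c‖ₑ := by
  calc ∫⁻ x, ‖g x - c‖ₑ ∂μ ≤ ∫⁻ x, ‖g x‖ₑ + ‖c‖ₑ ∂μ :=
        lintegral_mono fun _ => enorm_sub_le
    _ = ∫⁻ x, ‖g x‖ₑ ∂μ + μ univ * ‖c‖ₑ := by
        rw [lintegral_add_right _ measurable_const, lintegral_const, mul_comm]

noncomputable def averagingOperator (ε : ℝ) (k : ℝ → ℝ) (t : ℝ) : ℝ :=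
  (1 / ε) * ∫ s in (max (t - ε) 0)..t, |k s - k t|

theorem enorm_averagingOperator_le {k : ℝ → ℝ} {ε T t : ℝ} (hε : 0 < ε)
    (ht : t ∈ Icc 0 T) :
    ‖averagingOperator ε k t‖ₑ ≤ (ENNReal.ofReal ε)⁻¹ *
      (∫⁻ s in Ioc (t - ε) t, (Ioc 0 T).indicator (fun s => ‖k s‖ₑ) s) + ‖k t‖ₑ := by
  set a := max (t - ε) 0
  have hat : a ≤ t := max_le (by linarith) ht.1
  have hlength : (ENNReal.ofReal ε)⁻¹ * ENNReal.ofReal (t - a) ≤ 1 := by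
    calc (ENNReal.ofReal ε)⁻¹ * ENNReal.ofReal (t - a)
        ≤ (ENNReal.ofReal ε)⁻¹ * ENNReal.ofReal ε := by
          gcongr
          linarith [le_max_left (t - ε) 0]
      _ = 1 := ENNReal.inv_mul_cancel (ofReal_pos.2 hε).ne' ofReal_ne_top
  have hwindow : Ioc 0 T ∩ Ioc (t - ε) t = Ioc a t := by
    rw [Ioc_inter_Ioc, max_comm, min_eq_right ht.2]
  calc ‖averagingOperator ε k t‖ₑ
      = (ENNReal.ofReal ε)⁻¹ * ‖∫ s in Ioc a t, |k s - k t|‖ₑ := by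
        rw [averagingOperator, enorm_mul, one_div, enorm_inv hε.ne',
          Real.enorm_of_nonneg hε.le, intervalIntegral.integral_of_le hat]
    _ ≤ (ENNReal.ofReal ε)⁻¹ * ∫⁻ s in Ioc a t, ‖k s - k t‖ₑ := by
        gcongr (ENNReal.ofReal ε)⁻¹ * ?_
        simpa only [Real.enorm_abs] using enorm_integral_le_lintegral_enorm
          (μ := volume.restrict (Ioc a t)) fun s => |k s - k t|
    _ ≤ (ENNReal.ofReal ε)⁻¹ *
          ((∫⁻ s in Ioc a t, ‖k s‖ₑ) + ENNReal.ofReal (t - a) * ‖k t‖ₑ) := by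
        gcongr (ENNReal.ofReal ε)⁻¹ * ?_
        simpa only [Measure.restrict_apply_univ, Real.volume_Ioc]
          using lintegral_enorm_sub_const_le (volume.restrict (Ioc a t)) k (k t)
    _ ≤ (ENNReal.ofReal ε)⁻¹ *
          (∫⁻ s in Ioc (t - ε) t, (Ioc 0 T).indicator (fun s => ‖k s‖ₑ) s) + ‖k t‖ₑ := by
        rw [setLIntegral_indicator measurableSet_Ioc, hwindow, mul_add, ← mul_assoc]
        gcongr
        exact (mul_le_mul_left hlength _).trans_eq (one_mul _)

theorem lintegral_enorm_averagingOperator_le {k : ℝ → ℝ} {T ε : ℝ}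
    (hk : AEMeasurable k (volume.restrict (Ioc 0 T))) (hε : 0 < ε) :
    ∫⁻ t in Ioc 0 T, ‖averagingOperator ε k t‖ₑ ≤ 2 * ∫⁻ t in Ioc 0 T, ‖k t‖ₑ := by
  set f := (Ioc 0 T).indicator fun s => ‖k s‖ₑ
  have hf : AEMeasurable f := (aemeasurable_indicator_iff measurableSet_Ioc).2 hk.enorm
  have hε₀ : ENNReal.ofReal ε ≠ 0 := (ofReal_pos.2 hε).ne'
  calc ∫⁻ t in Ioc 0 T, ‖averagingOperator ε k t‖ₑ
      ≤ ∫⁻ t in Ioc 0 T, ((ENNReal.ofReal ε)⁻¹ * (∫⁻ s in Ioc (t - ε) t, f s) + ‖k t‖ₑ) :=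
        setLIntegral_mono' measurableSet_Ioc fun t ht =>
          enorm_averagingOperator_le hε (Ioc_subset_Icc_self ht)
    _ = (ENNReal.ofReal ε)⁻¹ * (∫⁻ t in Ioc 0 T, ∫⁻ s in Ioc (t - ε) t, f s)
          + ∫⁻ t in Ioc 0 T, ‖k t‖ₑ := by
        rw [lintegral_add_right' _ hk.enorm, lintegral_const_mul' _ _ (inv_ne_top.2 hε₀)]
    _ ≤ (ENNReal.ofReal ε)⁻¹ * (∫⁻ t, ∫⁻ s in Ioc (t - ε) t, f s) + ∫⁻ t in Ioc 0 T, ‖k t‖ₑ := by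
        gcongr (ENNReal.ofReal ε)⁻¹ * ?_ + _
        exact setLIntegral_le_lintegral _ _
    _ = 2 * ∫⁻ t in Ioc 0 T, ‖k t‖ₑ := by
        rw [lintegral_setLIntegral_Ioc_sub_self hf, ENNReal.inv_mul_cancel_left hε₀ ofReal_ne_top,
          lintegral_indicator measurableSet_Ioc, two_mul]

/-- The operator `(B_ε k)(t) = (1/ε) ∫_{max(t−ε,0)}^{t} |k(s) − k(t)| ds` on `L¹([0,T])`
has operator norm at most `2`, uniformly in `ε > 0`. -/
theorem averaging_operator_Beps_norm_le_two
    (T : ℝ) (hT : 0 < T) (k : ℝ → ℝ)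
    (hk : MeasureTheory.IntegrableOn k (Set.Icc 0 T))
    (ε : ℝ) (hε : 0 < ε) :
    ∫ t in (0:ℝ)..T, abs ((1 / ε) * ∫ s in (max (t - ε) 0)..t, |k s - k t|)
      ≤ 2 * ∫ s in (0:ℝ)..T, |k s| := by
  have hkI : IntegrableOn k (Ioc 0 T) := hk.mono_set Ioc_subset_Icc_self
  change ∫ t in (0:ℝ)..T, |averagingOperator ε k t| ≤ _
  rw [intervalIntegral.integral_of_le hT.le, intervalIntegral.integral_of_le hT.le]
  calc ∫ t in Ioc 0 T, |averagingOperator ε k t|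
      ≤ (∫⁻ t in Ioc 0 T, ‖averagingOperator ε k t‖ₑ).toReal := by
        simpa only [Real.norm_eq_abs, abs_abs, Real.enorm_eq_ofReal_abs]
          using (le_abs_self _).trans <| norm_integral_le_lintegral_norm
            (μ := volume.restrict (Ioc 0 T)) fun t => |averagingOperator ε k t|
    _ ≤ (2 * ∫⁻ t in Ioc 0 T, ‖k t‖ₑ).toReal :=
        toReal_mono (mul_ne_top ofNat_ne_top hkI.2.ne)
          (lintegral_enorm_averagingOperator_le hkI.1.aemeasurable hε)
    _ = 2 * ∫ s in Ioc 0 T, |k s| := by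
        rw [toReal_mul, ← integral_norm_eq_lintegral_enorm hkI.1]
        rfl
end

section
/- Let H be a separable Hilbert space, let 0 ≤ T' < T and let ε ∈ (0, T − T']. For every y ∈ L²([0,T]; H) one has ∫_0^T ‖T^ε(y)_s‖²_H ds ≤ ∫_0^{T'} ‖y_{t+ε} − y_t‖²_H dt ≤ 4 ∫_0^T ‖y_t‖²_H dt; in particular the operators T^ε are bounded on L²([0,T]; H) uniformly in ε. -/
/-! The window `Ioc (max (s - ε) 0) (min s T')` is `Ioc (s - ε) s ∩ Ioc 0 T'`, so `T^ε(y)` is the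
moving average, over windows of length `ε`, of `Δ = 1_{(0,T']} • (y (· + ε) - y)`. Cauchy–Schwarz
gives `‖T^ε(y)_s‖² ≤ ε⁻¹ ∫_{s-ε}^s ‖Δ‖²`, and by Tonelli every `t` lies in the windows of a set of
`s` of measure `ε`; integrating in `s` yields the first inequality. The second follows from
`‖a - b‖² ≤ 2‖a‖² + 2‖b‖²` and translation invariance, as `[ε, T' + ε] ⊆ [0, T]`. -/

open MeasureTheory Set
open scoped ENNReal

lemma lintegral_sq_le_measure_univ_mul_lintegral_sq {α : Type*} [MeasurableSpace α]
    (μ : Measure α) {f : α → ℝ≥0∞} (hf : AEMeasurable f μ) :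
    (∫⁻ x, f x ∂μ) ^ 2 ≤ μ univ * ∫⁻ x, f x ^ 2 ∂μ := by
  have h := ENNReal.lintegral_mul_le_Lp_mul_Lq μ Real.HolderConjugate.two_two hf
    (aemeasurable_const (b := 1))
  simp only [Pi.mul_apply, mul_one, ENNReal.rpow_two, one_pow, lintegral_one] at h
  calc (∫⁻ x, f x ∂μ) ^ 2
      ≤ ((∫⁻ x, f x ^ 2 ∂μ) ^ (1 / 2 : ℝ) * μ univ ^ (1 / 2 : ℝ)) ^ 2 := by gcongr
    _ = μ univ * ∫⁻ x, f x ^ 2 ∂μ := by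
      rw [mul_pow, ← ENNReal.rpow_mul_natCast, ← ENNReal.rpow_mul_natCast]
      norm_num [mul_comm]

lemma lintegral_setLIntegral_Ioc_sub_eq {g : ℝ → ℝ≥0∞} (hg : AEMeasurable g) (ε : ℝ) :
    ∫⁻ s, ∫⁻ t in Ioc (s - ε) s, g t = ENNReal.ofReal ε * ∫⁻ t, g t := by
  have hwindow : MeasurableSet {p : ℝ × ℝ | p.1 - ε < p.2 ∧ p.2 ≤ p.1} :=
    (measurableSet_lt (by fun_prop) measurable_snd).inter
      (measurableSet_le measurable_snd measurable_fst)
  have hmem : ∀ s t, t ∈ Ioc (s - ε) s ↔ s ∈ Ico t (t + ε) := fun s t => by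
    simp only [mem_Ioc, mem_Ico]
    constructor <;> intro h <;> constructor <;> linarith [h.1, h.2]
  calc ∫⁻ s, ∫⁻ t in Ioc (s - ε) s, g t
      = ∫⁻ s, ∫⁻ t, (Ioc (s - ε) s).indicator g t := by
        simp_rw [lintegral_indicator measurableSet_Ioc]
    _ = ∫⁻ t, ∫⁻ s, (Ioc (s - ε) s).indicator g t :=
        lintegral_lintegral_swap (hg.comp_snd.indicator hwindow)
    _ = ∫⁻ t, ∫⁻ s, (Ico t (t + ε)).indicator (fun _ => g t) s := by
        simp only [indicator_apply, hmem]
    _ = ENNReal.ofReal ε * ∫⁻ t, g t := by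
        simp only [lintegral_indicator measurableSet_Ico, setLIntegral_const, Real.volume_Ico,
          add_sub_cancel_left, mul_comm (g _)]
        exact lintegral_const_mul' _ _ ENNReal.ofReal_ne_top

section MovingAverage

variable {E : Type*} [NormedAddCommGroup E] [NormedSpace ℝ E]

lemma lintegral_enorm_movingAverage_sq_le {f : ℝ → E} (hf : AEStronglyMeasurable f)
    {ε : ℝ} (hε : 0 < ε) :
    ∫⁻ s, ‖(1 / ε) • ∫ t in Ioc (s - ε) s, f t‖ₑ ^ 2 ≤ ∫⁻ t, ‖f t‖ₑ ^ 2 := by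
  have hpointwise : ∀ s, ‖(1 / ε) • ∫ t in Ioc (s - ε) s, f t‖ₑ ^ 2
      ≤ ‖1 / ε‖ₑ ^ 2 * (ENNReal.ofReal ε * ∫⁻ t in Ioc (s - ε) s, ‖f t‖ₑ ^ 2) := by
    intro s
    rw [enorm_smul, mul_pow]
    gcongr
    calc ‖∫ t in Ioc (s - ε) s, f t‖ₑ ^ 2 ≤ (∫⁻ t in Ioc (s - ε) s, ‖f t‖ₑ) ^ 2 := by
          gcongr; exact enorm_integral_le_lintegral_enorm _
      _ ≤ ENNReal.ofReal ε * ∫⁻ t in Ioc (s - ε) s, ‖f t‖ₑ ^ 2 := by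
          simpa [Real.volume_Ioc] using lintegral_sq_le_measure_univ_mul_lintegral_sq
            (volume.restrict (Ioc (s - ε) s)) hf.enorm.restrict
  have hscale : ‖1 / ε‖ₑ * ENNReal.ofReal ε = 1 := by
    rw [Real.enorm_of_nonneg (by positivity), ← ENNReal.ofReal_mul (by positivity),
      one_div_mul_cancel hε.ne', ENNReal.ofReal_one]
  calc ∫⁻ s, ‖(1 / ε) • ∫ t in Ioc (s - ε) s, f t‖ₑ ^ 2
      ≤ ∫⁻ s, ‖1 / ε‖ₑ ^ 2 * (ENNReal.ofReal ε * ∫⁻ t in Ioc (s - ε) s, ‖f t‖ₑ ^ 2) :=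
        lintegral_mono hpointwise
    _ = (‖1 / ε‖ₑ * ENNReal.ofReal ε) ^ 2 * ∫⁻ t, ‖f t‖ₑ ^ 2 := by
        rw [lintegral_const_mul' _ _ (by simp), lintegral_const_mul' _ _ ENNReal.ofReal_ne_top,
          lintegral_setLIntegral_Ioc_sub_eq (hf.enorm.pow_const 2) ε]
        ring
    _ = ∫⁻ t, ‖f t‖ₑ ^ 2 := by rw [hscale, one_pow, one_mul]

lemma setIntegral_norm_movingAverage_sq_le {f : ℝ → E} (hf : MemLp f 2) {ε : ℝ} (hε : 0 < ε)
    (S : Set ℝ) :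
    ∫ s in S, ‖(1 / ε) • ∫ t in Ioc (s - ε) s, f t‖ ^ 2 ≤ ∫ t, ‖f t‖ ^ 2 := by
  by_cases hint : IntegrableOn (fun s => ‖(1 / ε) • ∫ t in Ioc (s - ε) s, f t‖ ^ 2) S
  · rw [integral_eq_lintegral_of_nonneg_ae (ae_of_all _ fun _ => sq_nonneg _)
      hint.aestronglyMeasurable]
    refine ENNReal.toReal_le_of_le_ofReal (integral_nonneg fun _ => sq_nonneg _) ?_
    rw [ofReal_integral_eq_lintegral_ofReal (hf.integrable_norm_pow two_ne_zero)
      (ae_of_all _ fun _ => sq_nonneg _)]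
    simp only [ENNReal.ofReal_pow (norm_nonneg _), ofReal_norm]
    exact (setLIntegral_le_lintegral _ _).trans (lintegral_enorm_movingAverage_sq_le hf.1 hε)
  · rw [integral_undef hint]
    exact integral_nonneg fun _ => sq_nonneg _

end MovingAverage

lemma norm_sub_sq_le_two_mul_add {E : Type*} [SeminormedAddGroup E] (x y : E) :
    ‖x - y‖ ^ 2 ≤ 2 * ‖x‖ ^ 2 + 2 * ‖y‖ ^ 2 :=
  calc ‖x - y‖ ^ 2 ≤ (‖x‖ + ‖y‖) ^ 2 := by gcongr; exact norm_sub_le x y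
    _ ≤ 2 * ‖x‖ ^ 2 + 2 * ‖y‖ ^ 2 := by linarith [add_sq_le (a := ‖x‖) (b := ‖y‖)]

lemma intervalIntegral_norm_sub_shift_sq_le {E : Type*} [SeminormedAddGroup E] {f : ℝ → E}
    {a b c h : ℝ}
    (hf : IntervalIntegrable (fun t => ‖f t‖ ^ 2) volume a b) (hh : 0 ≤ h) (hac : a ≤ c)
    (hcb : c + h ≤ b) :
    ∫ t in a..c, ‖f (t + h) - f t‖ ^ 2 ≤ 4 * ∫ t in a..b, ‖f t‖ ^ 2 := by
  have hab : a ≤ b := by linarith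
  have hF : IntervalIntegrable (fun t => ‖f t‖ ^ 2) volume a c :=
    hf.mono_set (uIcc_subset_uIcc_left (by rw [uIcc_of_le hab]; exact ⟨hac, by linarith⟩))
  have hFshift : IntervalIntegrable (fun t => ‖f (t + h)‖ ^ 2) volume a c := by
    have hF' : IntervalIntegrable (fun t => ‖f t‖ ^ 2) volume (a + h) (c + h) :=
      hf.mono_set (uIcc_subset_uIcc (by rw [uIcc_of_le hab]; exact ⟨by linarith, by linarith⟩)
        (by rw [uIcc_of_le hab]; exact ⟨by linarith, hcb⟩))
    simpa using hF'.comp_add_right h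
  have hmono : ∀ {u v : ℝ}, a ≤ u → u ≤ v → v ≤ b →
      ∫ t in u..v, ‖f t‖ ^ 2 ≤ ∫ t in a..b, ‖f t‖ ^ 2 := fun hau huv hvb =>
    intervalIntegral.integral_mono_interval hau huv hvb (ae_of_all _ fun _ => sq_nonneg _) hf
  calc ∫ t in a..c, ‖f (t + h) - f t‖ ^ 2
      ≤ ∫ t in a..c, (2 * ‖f (t + h)‖ ^ 2 + 2 * ‖f t‖ ^ 2) := by
        simp only [intervalIntegral.integral_of_le hac]
        exact integral_mono_of_nonneg (ae_of_all _ fun _ => sq_nonneg _)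
          ((hFshift.const_mul 2).add (hF.const_mul 2)).1
          (ae_of_all _ fun t => norm_sub_sq_le_two_mul_add _ _)
    _ = 2 * (∫ t in a + h..c + h, ‖f t‖ ^ 2) + 2 * ∫ t in a..c, ‖f t‖ ^ 2 := by
        rw [intervalIntegral.integral_add (hFshift.const_mul 2) (hF.const_mul 2),
          intervalIntegral.integral_const_mul, intervalIntegral.integral_const_mul,
          intervalIntegral.integral_comp_add_right (fun t => ‖f t‖ ^ 2)]
    _ ≤ 2 * (∫ t in a..b, ‖f t‖ ^ 2) + 2 * ∫ t in a..b, ‖f t‖ ^ 2 := by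
        gcongr
        · exact hmono (by linarith) (by linarith) hcb
        · exact hmono le_rfl hac (by linarith)
    _ = 4 * ∫ t in a..b, ‖f t‖ ^ 2 := by ring

lemma MeasureTheory.MemLp.comp_add_right_restrict_Icc {E : Type*} [NormedAddCommGroup E]
    {f : ℝ → E} {p : ℝ≥0∞} {a b : ℝ} (hf : MemLp f p (volume.restrict (Icc a b))) (c : ℝ) :
    MemLp (fun t => f (t + c)) p (volume.restrict (Icc (a - c) (b - c))) := by
  have hshift := (measurePreserving_add_right volume c).restrict_preimage
    (measurableSet_Icc (a := a) (b := b))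
  rw [preimage_add_const_Icc] at hshift
  exact hf.comp_measurePreserving hshift

theorem Teps_uniformly_bounded_general
    (H : Type*) [NormedAddCommGroup H] [InnerProductSpace ℝ H]
    (T T' : ℝ) (hT' : 0 ≤ T')
    (ε : ℝ) (hε : 0 < ε) (hεT : ε ≤ T - T')
    (y : ℝ → H) (hy : MemLp y 2 (volume.restrict (Set.Icc 0 T))) :
    (∫ s in (0:ℝ)..T,
        ‖(1 / ε) • ∫ t in Set.Ioc (max (s - ε) 0) (min s T'), (y (t + ε) - y t)‖ ^ 2)
      ≤ (∫ t in (0:ℝ)..T', ‖y (t + ε) - y t‖ ^ 2) ∧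
    (∫ t in (0:ℝ)..T', ‖y (t + ε) - y t‖ ^ 2) ≤ 4 * ∫ t in (0:ℝ)..T, ‖y t‖ ^ 2 := by
  have hT : 0 ≤ T := by linarith
  set Δ : ℝ → H := (Ioc 0 T').indicator fun t => y (t + ε) - y t
  have hΔ : MemLp Δ 2 := by
    refine (memLp_indicator_iff_restrict measurableSet_Ioc).2 (MemLp.sub ?_ ?_)
    · refine (hy.comp_add_right_restrict_Icc ε).mono_measure (Measure.restrict_mono ?_ le_rfl)
      exact fun t ht => ⟨by linarith [ht.1], by linarith [ht.2]⟩
    · exact hy.mono_measure (Measure.restrict_mono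
        (Ioc_subset_Icc_self.trans (Icc_subset_Icc_right (by linarith))) le_rfl)
  have hwindow : ∀ s, ∫ t in Ioc (max (s - ε) 0) (min s T'), (y (t + ε) - y t)
      = ∫ t in Ioc (s - ε) s, Δ t := fun s => by
    rw [setIntegral_indicator measurableSet_Ioc, Ioc_inter_Ioc]
  have hnormΔ : ∫ t in (0:ℝ)..T', ‖y (t + ε) - y t‖ ^ 2 = ∫ t, ‖Δ t‖ ^ 2 := by
    rw [intervalIntegral.integral_of_le hT', ← integral_indicator measurableSet_Ioc]
    congr with t
    by_cases ht : t ∈ Ioc 0 T' <;> simp [Δ, ht]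
  have hy_sq : IntervalIntegrable (fun t => ‖y t‖ ^ 2) volume 0 T :=
    (intervalIntegrable_iff_integrableOn_Icc_of_le hT).2 (hy.integrable_norm_pow two_ne_zero)
  refine ⟨?_, intervalIntegral_norm_sub_shift_sq_le hy_sq hε.le hT' (by linarith)⟩
  rw [hnormΔ, intervalIntegral.integral_of_le hT]
  simp_rw [hwindow]
  exact setIntegral_norm_movingAverage_sq_le hΔ hε _

/-- For `y ∈ L²([0,T]; H)` and `0 < ε ≤ T − T'`, the operator
`T^ε(y)_s = (1/ε) ∫_{max(s−ε,0)}^{min(s,T')} (y(t+ε) − y(t)) dt` satisfies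
`∫_0^T ‖T^ε(y)_s‖² ds ≤ ∫_0^{T'} ‖y(t+ε) − y(t)‖² dt ≤ 4 ∫_0^T ‖y(t)‖² dt`;
in particular the operators `T^ε` are bounded on `L²([0,T]; H)` uniformly in `ε`. -/
theorem Teps_uniformly_bounded
    (H : Type*) [NormedAddCommGroup H] [InnerProductSpace ℝ H] [CompleteSpace H]
    [SecondCountableTopology H]
    (T T' : ℝ) (hT' : 0 ≤ T') (hT'T : T' < T)
    (ε : ℝ) (hε : 0 < ε) (hεT : ε ≤ T - T')
    (y : ℝ → H) (hy : MemLp y 2 (volume.restrict (Set.Icc 0 T))) :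
    (∫ s in (0:ℝ)..T,
        ‖(1 / ε) • ∫ t in Set.Ioc (max (s - ε) 0) (min s T'), (y (t + ε) - y t)‖ ^ 2)
      ≤ (∫ t in (0:ℝ)..T', ‖y (t + ε) - y t‖ ^ 2) ∧
    (∫ t in (0:ℝ)..T', ‖y (t + ε) - y t‖ ^ 2) ≤ 4 * ∫ t in (0:ℝ)..T, ‖y t‖ ^ 2 :=
  Teps_uniformly_bounded_general H T T' hT' ε hε hεT y hy
end
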